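/- Let $\gamma \in (0,1]$, $\beta := \frac{2}{2-\gamma}$, and let $U \in C^2((R,\infty))$ be a positive solution of $U'' + \big(\frac{n-1}{r} + \frac{r}{2}\big)U' - \frac{\beta}{2} U = \gamma U^{\gamma-1}$ on $(R, \infty)$ with $U(r) \to 0$ and $U'(r) \to 0$ as $r \downarrow R$, and $U, U' > 0$ on $(R,\infty)$. Then $\lim_{r \to \infty} U(r) = \infty$. -/

import Mathlib

/-!
If `U ≤ M` on `(R, ∞)`, then, as `γ - 1 ≤ 0`, the source term `γ U ^ (γ - 1)` is at least
`c = γ M ^ (γ - 1) > 0`, and since `β U ≥ 0` the equation gives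
`U'' + ((n - 1) / r + r / 2) U' ≥ c`. A comparison argument keeps `U'` above a barrier of size
about `c / ((n + 2) r)` for large `r`, so `U` grows at least like a multiple of `log r`,
contradicting `U ≤ M`.
-/

open Set Filter Real

lemma monotoneOn_of_forall_hasDerivAt_nonneg {D : Set ℝ} (hD : Convex ℝ D) {f f' : ℝ → ℝ}
    (hf : ∀ x ∈ D, HasDerivAt f (f' x) x) (hf'₀ : ∀ x ∈ D, 0 ≤ f' x) : MonotoneOn f D :=
  monotoneOn_of_hasDerivWithinAt_nonneg hD (fun x hx => (hf x hx).continuousAt.continuousWithinAt)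
    (fun x hx => (hf x (interior_subset hx)).hasDerivWithinAt)
    (fun x hx => hf'₀ x (interior_subset hx))

lemma image_ge_of_deriv_gt_deriv_boundary_Ici {g g' B B' : ℝ → ℝ} {a : ℝ}
    (hg : ∀ x ∈ Ici a, HasDerivAt g (g' x) x) (hB : ∀ x ∈ Ici a, HasDerivAt B (B' x) x)
    (ha : B a ≤ g a) (bound : ∀ x ∈ Ici a, g x = B x → B' x < g' x) :
    ∀ x ∈ Ici a, B x ≤ g x := by
  intro x hx
  have hcomp := image_le_of_deriv_right_lt_deriv_boundary' (f := fun y => -g y)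
    (f' := fun y => -g' y) (B := fun y => -B y) (B' := fun y => -B' y) (a := a) (b := x)
    (fun y hy => (hg y hy.1).neg.continuousAt.continuousWithinAt)
    (fun y hy => (hg y hy.1).neg.hasDerivWithinAt) (neg_le_neg ha)
    (fun y hy => (hB y hy.1).neg.continuousAt.continuousWithinAt)
    (fun y hy => (hB y hy.1).neg.hasDerivWithinAt)
    (fun y hy hyeq => neg_lt_neg (bound y hy.1 (neg_inj.1 hyeq)))
    ⟨hx, le_rfl⟩
  exact neg_le_neg_iff.1 hcomp

/-- Vanishes at `a` and behaves like `k / x`, whose primitive `k log x` is unbounded. -/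
noncomputable def odeBarrier (k a x : ℝ) : ℝ := k * (x - a) / x ^ 2

lemma hasDerivAt_odeBarrier (k a : ℝ) {x : ℝ} (hx : x ≠ 0) :
    HasDerivAt (odeBarrier k a) (k * (2 * a - x) / x ^ 3) x := by
  refine ((((hasDerivAt_id' x).sub_const a).const_mul k).div (hasDerivAt_pow 2 x)
    (pow_ne_zero 2 hx)).congr_deriv ?_
  field_simp
  ring

lemma odeBarrier_le_of_ode_ineq {n : ℕ} {a c : ℝ} {g g' : ℝ → ℝ} (ha : 2 ≤ a) (hc : 0 < c)
    (hg : ∀ x ∈ Ici a, HasDerivAt g (g' x) x) (hga : 0 ≤ g a)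
    (hode : ∀ x ∈ Ici a, c ≤ g' x + (((n : ℝ) - 1) / x + x / 2) * g x) :
    ∀ x ∈ Ici a, odeBarrier (c / (n + 2)) a x ≤ g x := by
  refine image_ge_of_deriv_gt_deriv_boundary_Ici hg
    (fun x hx => hasDerivAt_odeBarrier _ a (by linarith [mem_Ici.1 hx])) (by simpa [odeBarrier]) ?_
  intro x hx hgx
  have hx2 : 2 ≤ x := ha.trans hx
  have hn : (0 : ℝ) ≤ n := n.cast_nonneg
  have hstrict : c / (n + 2) * (2 * a - x) / x ^ 3
      + (((n : ℝ) - 1) / x + x / 2) * odeBarrier (c / (n + 2)) a x < c := by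
    have hk : 0 < c / (n + 2) := by positivity
    have hx0 : 0 < x := by linarith
    have hsum : c / (n + 2) * (2 * a - x) / x ^ 3
        + (((n : ℝ) - 1) / x + x / 2) * odeBarrier (c / (n + 2)) a x
        = c / (n + 2) * ((2 * a - x) + ((n : ℝ) - 1) * (x - a) + x ^ 2 * (x - a) / 2) / x ^ 3 := by
      rw [odeBarrier]
      field_simp
      ring
    have hpoly : (2 * a - x) + ((n : ℝ) - 1) * (x - a) + x ^ 2 * (x - a) / 2 < (n + 2) * x ^ 3 := by
      have hax : a ≤ x := hx
      have h1 : ((n : ℝ) - 1) * (x - a) ≤ n * x := by nlinarith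
      have h2 : x ^ 2 * (x - a) ≤ x ^ 3 := by nlinarith [sq_nonneg x]
      have h3 : 4 * x ≤ x ^ 3 := by nlinarith
      have h4 : n * x ≤ n * x ^ 3 := by nlinarith
      nlinarith
    rw [hsum, div_lt_iff₀ (by positivity)]
    calc _ < c / (n + 2) * ((n + 2) * x ^ 3) := mul_lt_mul_of_pos_left hpoly hk
      _ = c * x ^ 3 := by field_simp
  have := hode x hx
  rw [hgx] at this
  linarith

lemma tendsto_atTop_of_odeBarrier_le_deriv {u u' : ℝ → ℝ} {k a : ℝ} (hk : 0 < k) (ha : 0 < a)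
    (hu : ∀ x ∈ Ici a, HasDerivAt u (u' x) x) (hbar : ∀ x ∈ Ici a, odeBarrier k a x ≤ u' x) :
    Tendsto u atTop atTop := by
  set h : ℝ → ℝ := fun x => k * (log x + a / x)
  have hh : ∀ x ∈ Ici a, HasDerivAt h (odeBarrier k a x) x := by
    intro x hx
    have hx0 : x ≠ 0 := by linarith [mem_Ici.1 hx]
    refine (((hasDerivAt_log hx0).add ((hasDerivAt_inv hx0).const_mul a)).const_mul k)
      |>.congr_deriv ?_
    simp only [odeBarrier]
    field_simp
    ring
  have hmono : MonotoneOn (fun x => u x - h x) (Ici a) :=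
    monotoneOn_of_forall_hasDerivAt_nonneg (convex_Ici a) (fun x hx => (hu x hx).sub (hh x hx))
      (fun x hx => sub_nonneg.2 (hbar x hx))
  have hlog : Tendsto (fun x => u a - h a + k * log x) atTop atTop :=
    tendsto_atTop_add_const_left _ _ (tendsto_log_atTop.const_mul_atTop hk)
  refine tendsto_atTop_mono' _ ?_ hlog
  filter_upwards [eventually_ge_atTop a] with x hx
  have h1 := hmono self_mem_Ici hx hx
  have h2 : 0 ≤ k * (a / x) := div_nonneg ha.le (ha.le.trans hx) |> mul_nonneg hk.le
  simp only [h] at h1 ⊢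
  linarith

lemma MonotoneOn.exists_forall_le_of_not_tendsto_atTop {α β : Type*} [Preorder α]
    [LinearOrder β] {f : α → β} {a : α} (hf : MonotoneOn f (Ioi a))
    (h : ¬ Tendsto f atTop atTop) : ∃ M, ∀ x ∈ Ioi a, f x ≤ M := by
  by_contra! hunb
  refine h (tendsto_atTop.2 fun M => ?_)
  obtain ⟨x, hx, hMx⟩ := hunb M
  filter_upwards [eventually_ge_atTop x] with y hy
  exact hMx.le.trans (hf hx (lt_of_lt_of_le hx hy) hy)

theorem tendsto_atTop_of_ode_ineq {n : ℕ} {R c : ℝ} {u u' u'' : ℝ → ℝ} (hc : 0 < c)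
    (hu : ∀ x ∈ Ioi R, HasDerivAt u (u' x) x) (hu' : ∀ x ∈ Ioi R, HasDerivAt u' (u'' x) x)
    (hpos : ∀ x ∈ Ioi R, 0 ≤ u' x)
    (hode : ∀ x ∈ Ioi R, c ≤ u'' x + (((n : ℝ) - 1) / x + x / 2) * u' x) :
    Tendsto u atTop atTop := by
  set a := max R 0 + 2
  have ha2 : 2 ≤ a := by linarith [le_max_right R 0]
  have hsub : Ici a ⊆ Ioi R := fun x (hx : a ≤ x) => by
    simp only [mem_Ioi]
    linarith [le_max_left R 0]
  exact tendsto_atTop_of_odeBarrier_le_deriv (by positivity) (by linarith)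
    (fun x hx => hu x (hsub hx))
    (odeBarrier_le_of_ode_ineq ha2 hc (fun x hx => hu' x (hsub hx)) (hpos a (hsub self_mem_Ici))
      fun x hx => hode x (hsub hx))

theorem stmt13_general (n : ℕ) (R γ β : ℝ)
    (hγ0 : 0 < γ) (hγ1 : γ ≤ 1) (hβ : β = 2 / (2 - γ)) (U : ℝ → ℝ)
    (hC2 : ContDiffOn ℝ 2 U (Set.Ioi R))
    (heq : ∀ r ∈ Set.Ioi R,
      deriv (deriv U) r + (((n : ℝ) - 1) / r + r / 2) * deriv U r - β / 2 * U r
        = γ * U r ^ (γ - 1))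
    (hUpos : ∀ r ∈ Set.Ioi R, 0 < U r)
    (hU'pos : ∀ r ∈ Set.Ioi R, 0 < deriv U r) :
    Filter.Tendsto U Filter.atTop Filter.atTop := by
  have hU : ∀ r ∈ Ioi R, HasDerivAt U (deriv U r) r := fun r hr =>
    ((hC2.differentiableOn (by norm_num)).differentiableAt (isOpen_Ioi.mem_nhds hr)).hasDerivAt
  have hU' : ∀ r ∈ Ioi R, HasDerivAt (deriv U) (deriv (deriv U) r) r := fun r hr =>
    (((hC2.deriv_of_isOpen isOpen_Ioi (by norm_num)).differentiableOn one_ne_zero)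
      |>.differentiableAt (isOpen_Ioi.mem_nhds hr)).hasDerivAt
  by_contra hT
  obtain ⟨M, hM⟩ := (monotoneOn_of_forall_hasDerivAt_nonneg (convex_Ioi R) hU
    fun r hr => (hU'pos r hr).le).exists_forall_le_of_not_tendsto_atTop hT
  have hM0 : 0 < M := (hUpos (R + 1) (by simp)).trans_le (hM (R + 1) (by simp))
  refine hT (tendsto_atTop_of_ode_ineq (n := n) (c := γ * M ^ (γ - 1)) (by positivity) hU hU'
    (fun r hr => (hU'pos r hr).le) fun r hr => ?_)
  have hsource : γ * M ^ (γ - 1) ≤ γ * U r ^ (γ - 1) :=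
    mul_le_mul_of_nonneg_left (rpow_le_rpow_of_nonpos (hUpos r hr) (hM r hr) (by linarith)) hγ0.le
  have hlinear : 0 ≤ β / 2 * U r := by
    have : 0 < 2 - γ := by linarith
    have := hUpos r hr
    rw [hβ]
    positivity
  linarith [heq r hr]

theorem stmt13 (n : ℕ) (hn : 1 ≤ n) (R γ β : ℝ) (hR : 0 < R)
    (hγ0 : 0 < γ) (hγ1 : γ ≤ 1) (hβ : β = 2 / (2 - γ)) (U : ℝ → ℝ)
    (hC2 : ContDiffOn ℝ 2 U (Set.Ioi R))
    (heq : ∀ r ∈ Set.Ioi R,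
      deriv (deriv U) r + (((n : ℝ) - 1) / r + r / 2) * deriv U r - β / 2 * U r
        = γ * U r ^ (γ - 1))
    (hU0 : Filter.Tendsto U (nhdsWithin R (Set.Ioi R)) (nhds 0))
    (hU'0 : Filter.Tendsto (deriv U) (nhdsWithin R (Set.Ioi R)) (nhds 0))
    (hUpos : ∀ r ∈ Set.Ioi R, 0 < U r)
    (hU'pos : ∀ r ∈ Set.Ioi R, 0 < deriv U r) :
    Filter.Tendsto U Filter.atTop Filter.atTop :=
  stmt13_general n R γ β hγ0 hγ1 hβ U hC2 heq hUpos hU'pos
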